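/- arXiv:2307.13325 — 4 statements merged into one kernel-verified Lean document; each statement's English description precedes it below -/
import Mathlib

section
/- Let G = ⟨S|R⟩ be a C'(1/6)-group. If there is no sublinear exhaustion for (S,R), then G satisfies the increasing partial small-cancellation condition (IPSC). (This is the paper's Lemma 3.7: if the Morse boundary of G is not σ-compact, then G satisfies the IPSC.) -/
/-!
Given the sequence `n`, the functions `ρ_j(t) = j + max_{m ≤ t} inf {m / i : i ≥ j, n i ≤ m}`
are sublinear and increase with `j`. Since they do not form a sublinear exhaustion, some ray `γ`
with sublinear intersection function `ρ_γ` escapes every `ρ_j`: for some `t` it shares with a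
relator `r` a subword `w` with `|w| = ρ_γ(t) > j` and `|w| > |r| / i` for some `i ≥ j` with
`n i ≤ |r|`. The viable function is `f = max 6 g`, where `g` is the nondecreasing minorant of
`k / (ρ_γ(k) + 1)`; it tends to infinity because `ρ_γ` is sublinear. A common subword `p` of `w`
and of `r' ∈ R̄` has `|p| ≤ ρ_γ(|r'|) < |r'| / g(|r'|)`, and when `g(|r'|) < 6` the relator `r'`
is shorter than `r`, so `p` is a piece and `C'(1/6)` gives `|p| < |r'| / 6`.
-/

namespace SmallCancel

/-- A word over `S`: a finite sequence of letters from the symmetrized alphabet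
`S ∪ S⁻¹`, encoded as pairs `(s, b)` where `b = true` denotes the letter `s`
and `b = false` denotes its formal inverse `s⁻¹`. -/
abbrev Word (S : Type) := List (S × Bool)

/-- The formal inverse of a word. -/
def wInv {S : Type} (w : Word S) : Word S := (w.map fun a => (a.1, !a.2)).reverse

/-- A word is reduced if no letter is immediately followed by its inverse. -/
def Reduced {S : Type} (w : Word S) : Prop := w.Chain' fun a b => b ≠ (a.1, !a.2)

/-- A word is cyclically reduced if all of its cyclic shifts are reduced. -/
def CyclicallyReduced {S : Type} (w : Word S) : Prop := ∀ n, Reduced (w.rotate n)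

/-- `R̄`: the set of all cyclic shifts of elements of `R` and of their inverses. -/
def cyclicClosure {S : Type} (R : Set (Word S)) : Set (Word S) :=
  {w | ∃ r ∈ R, ∃ n, w = r.rotate n ∨ w = (wInv r).rotate n}

/-- `p` is a piece with respect to `R` if it is a prefix of two distinct elements
of `R̄`. -/
def IsPiece {S : Type} (R : Set (Word S)) (p : Word S) : Prop :=
  ∃ r₁ ∈ cyclicClosure R, ∃ r₂ ∈ cyclicClosure R, r₁ ≠ r₂ ∧ p <+: r₁ ∧ p <+: r₂

/-- The `C'(λ)` small-cancellation condition: every piece `p` that is a subword of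
some `r ∈ R̄` satisfies `|p| < λ|r|`. -/
def SmallCancellation {S : Type} (R : Set (Word S)) (lam : ℝ) : Prop :=
  ∀ p, IsPiece R p → ∀ r ∈ cyclicClosure R, p <:+: r →
    (p.length : ℝ) < lam * r.length

/-- The element of the presented group `⟨S | R⟩` represented by a word `w`. -/
def toPresented {S : Type} (R : Set (Word S)) (w : Word S) :
    PresentedGroup {g : FreeGroup S | ∃ r ∈ R, g = FreeGroup.mk r} :=
  QuotientGroup.mk (FreeGroup.mk w)

/-- A word `w` is geodesic if every word representing the same element of the
presented group `⟨S | R⟩` is at least as long as `w`. -/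
def IsGeodesicWord {S : Type} (R : Set (Word S)) (w : Word S) : Prop :=
  ∀ v : Word S, toPresented R v = toPresented R w → w.length ≤ v.length

/-- The finite prefix of length `n` of an infinite word `γ`. -/
def rayPrefix {S : Type} (γ : ℕ → S × Bool) (n : ℕ) : Word S := (List.range n).map γ

/-- A geodesic ray: an infinite word all of whose finite prefixes are geodesic. -/
def IsGeodesicRay {S : Type} (R : Set (Word S)) (γ : ℕ → S × Bool) : Prop :=
  ∀ n, IsGeodesicWord R (rayPrefix γ n)

/-- The intersection function of a ray `γ`:
`ρ_γ(t) = max{|w| : w is a subword of some r ∈ R̄ with |r| ≤ t and a subword of γ}`. -/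
noncomputable def intersectionFn {S : Type} (R : Set (Word S)) (γ : ℕ → S × Bool)
    (t : ℕ) : ℕ :=
  sSup {n | ∃ w : Word S, (∃ r ∈ cyclicClosure R, r.length ≤ t ∧ w <:+: r) ∧
    (∃ m, w <:+: rayPrefix γ m) ∧ w.length = n}

/-- A function is sublinear if `ρ(n)/n → 0`. -/
def Sublinear (ρ : ℕ → ℝ) : Prop :=
  Filter.Tendsto (fun n => ρ n / n) Filter.atTop (nhds 0)

/-- A weakly increasing function `f : ℕ → ℝ` is viable if `f(n) ≥ 6` for all `n`
and `f(n) → ∞`. -/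
def Viable (f : ℕ → ℝ) : Prop :=
  Monotone f ∧ (∀ n, 6 ≤ f n) ∧ Filter.Tendsto f Filter.atTop Filter.atTop

/-- The `C'(1/f)` small-cancellation condition for a set of relators: every piece `p`
that is a subword of some `r ∈ R̄` satisfies `|p| < |r|/f(|r|)`. -/
def CPrimeOverF {S : Type} (R : Set (Word S)) (f : ℕ → ℝ) : Prop :=
  ∀ p, IsPiece R p → ∀ r ∈ cyclicClosure R, p <:+: r →
    (p.length : ℝ) < (r.length : ℝ) / f r.length

/-- The pair `(x, R)` satisfies the `C'(1/f)` condition: every word `p` that is a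
subword both of `x` and of some `r ∈ R̄` satisfies `|p| < |r|/f(|r|)`. -/
def PairCPrimeOverF {S : Type} (x : Word S) (R : Set (Word S)) (f : ℕ → ℝ) : Prop :=
  ∀ p, p <:+: x → ∀ r ∈ cyclicClosure R, p <:+: r →
    (p.length : ℝ) < (r.length : ℝ) / f r.length

/-- The increasing partial small-cancellation condition (IPSC). -/
def IPSC {S : Type} (R : Set (Word S)) : Prop :=
  ∀ n : ℕ → ℕ, (∀ i, 0 < n i) → ∃ f : ℕ → ℝ, Viable f ∧
    ∀ K : ℕ, ∃ i, K ≤ i ∧ ∃ x y : Word S, x ++ y ∈ cyclicClosure R ∧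
      n i ≤ (x ++ y).length ∧ ((x ++ y).length : ℝ) / i ≤ x.length ∧
      PairCPrimeOverF x R f

end SmallCancel

namespace SmallCancel

/-- A sublinear exhaustion for `(S, R)`: a pointwise increasing sequence of sublinear
functions such that every geodesic ray with sublinear intersection function has its
intersection function bounded by one member of the sequence. -/
def SublinearExhaustion {S : Type} (R : Set (Word S)) : Prop :=
  ∃ ρ : ℕ → ℕ → ℝ, (∀ i, Sublinear (ρ i)) ∧ (∀ i t, ρ i t ≤ ρ (i + 1) t) ∧
    ∀ γ : ℕ → S × Bool, IsGeodesicRay R γ →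
      Sublinear (fun t => (intersectionFn R γ t : ℝ)) →
      ∃ i, ∀ t, (intersectionFn R γ t : ℝ) ≤ ρ i t

end SmallCancel

namespace SmallCancel

open Filter

variable {S : Type}

section CyclicClosure

variable {R : Set (Word S)}

theorem rotate_mem_cyclicClosure {r : Word S} (hr : r ∈ cyclicClosure R) (k : ℕ) :
    r.rotate k ∈ cyclicClosure R := by
  obtain ⟨s, hs, n, h | h⟩ := hr
  · exact ⟨s, hs, n + k, Or.inl (by rw [h, List.rotate_rotate])⟩
  · exact ⟨s, hs, n + k, Or.inr (by rw [h, List.rotate_rotate])⟩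

theorem exists_append_mem_cyclicClosure_of_infix {w r : Word S} (hr : r ∈ cyclicClosure R)
    (hw : w <:+: r) : ∃ y, w ++ y ∈ cyclicClosure R ∧ (w ++ y).length = r.length := by
  obtain ⟨a, b, rfl⟩ := hw
  refine ⟨b ++ a, ?_, by simp [Nat.add_comm, Nat.add_left_comm]⟩
  have := rotate_mem_cyclicClosure hr a.length
  rwa [List.append_assoc, List.rotate_append_length_eq, List.append_assoc] at this

theorem isPiece_of_infix_of_length_ne {p r₁ r₂ : Word S} (hr₁ : r₁ ∈ cyclicClosure R)
    (hr₂ : r₂ ∈ cyclicClosure R) (hp₁ : p <:+: r₁) (hp₂ : p <:+: r₂)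
    (hlen : r₁.length ≠ r₂.length) : IsPiece R p := by
  obtain ⟨y₁, hy₁, hlen₁⟩ := exists_append_mem_cyclicClosure_of_infix hr₁ hp₁
  obtain ⟨y₂, hy₂, hlen₂⟩ := exists_append_mem_cyclicClosure_of_infix hr₂ hp₂
  refine ⟨_, hy₁, _, hy₂, fun h => hlen ?_, List.prefix_append p y₁, List.prefix_append p y₂⟩
  rw [← hlen₁, ← hlen₂, h]

end CyclicClosure

section IntersectionFn

variable {R : Set (Word S)} {γ : ℕ → S × Bool}

theorem bddAbove_intersectionFn_set (t : ℕ) :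
    BddAbove {n | ∃ w : Word S, (∃ r ∈ cyclicClosure R, r.length ≤ t ∧ w <:+: r) ∧
      (∃ m, w <:+: rayPrefix γ m) ∧ w.length = n} := by
  refine ⟨t, ?_⟩
  rintro _ ⟨w, ⟨r, -, hrt, hwr⟩, -, rfl⟩
  exact hwr.length_le.trans hrt

theorem length_le_intersectionFn {p r : Word S} (hr : r ∈ cyclicClosure R) (hpr : p <:+: r)
    (hpγ : ∃ m, p <:+: rayPrefix γ m) : p.length ≤ intersectionFn R γ r.length :=
  le_csSup (bddAbove_intersectionFn_set _) ⟨p, ⟨r, hr, le_rfl, hpr⟩, hpγ, rfl⟩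

theorem exists_length_eq_intersectionFn {t : ℕ} (ht : 0 < intersectionFn R γ t) :
    ∃ w r, r ∈ cyclicClosure R ∧ r.length ≤ t ∧ w <:+: r ∧ (∃ m, w <:+: rayPrefix γ m) ∧
      w.length = intersectionFn R γ t := by
  obtain ⟨w, ⟨r, hr, hrt, hwr⟩, hwγ, hw⟩ := Nat.sSup_mem
    (Set.nonempty_iff_ne_empty.2 fun h => ht.ne' (by rw [intersectionFn, h, csSup_empty]; rfl))
    (bddAbove_intersectionFn_set t)
  exact ⟨w, r, hr, hrt, hwr, hwγ, hw⟩

end IntersectionFn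

theorem sublinear_of_le_add_mul {ρ : ℕ → ℝ} (hρ : ∀ t, 0 ≤ ρ t)
    (h : ∀ ε > 0, ∃ C, ∀ t, ρ t ≤ C + ε * t) : Sublinear ρ := by
  refine tendsto_order.2 ⟨fun a ha => Eventually.of_forall fun t =>
    ha.trans_le (div_nonneg (hρ t) t.cast_nonneg), fun a ha => ?_⟩
  obtain ⟨C, hC⟩ := h (a / 2) (half_pos ha)
  have hCt : ∀ᶠ t : ℕ in atTop, C / t < a / 2 :=
    (tendsto_const_div_atTop_nhds_zero_nat C).eventually (gt_mem_nhds (half_pos ha))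
  filter_upwards [hCt, eventually_gt_atTop 0] with t hCt ht
  have ht : (0 : ℝ) < t := Nat.cast_pos.2 ht
  calc ρ t / t ≤ (C + a / 2 * t) / t := div_le_div_of_nonneg_right (hC t) ht.le
    _ = C / t + a / 2 := by field_simp
    _ < a := by linarith

section SlowGrowth

noncomputable def slowGrowth (ρ : ℕ → ℝ) (m : ℕ) : ℝ :=
  ⨅ k, ((m + k : ℕ) : ℝ) / (ρ (m + k) + 1)

variable {ρ : ℕ → ℝ}

theorem bddBelow_range_slowGrowth (hρ : ∀ t, 0 ≤ ρ t) (m : ℕ) :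
    BddBelow (Set.range fun k => ((m + k : ℕ) : ℝ) / (ρ (m + k) + 1)) := by
  refine ⟨0, ?_⟩
  rintro _ ⟨k, rfl⟩
  have := hρ (m + k)
  positivity

theorem slowGrowth_le (hρ : ∀ t, 0 ≤ ρ t) (m : ℕ) : slowGrowth ρ m ≤ m / (ρ m + 1) :=
  ciInf_le (bddBelow_range_slowGrowth hρ m) 0

theorem slowGrowth_mono (hρ : ∀ t, 0 ≤ ρ t) : Monotone (slowGrowth ρ) := by
  intro m m' hm
  refine le_ciInf fun k => ?_
  obtain ⟨d, rfl⟩ := Nat.exists_eq_add_of_le hm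
  have := ciInf_le (bddBelow_range_slowGrowth hρ m) (d + k)
  rwa [← Nat.add_assoc] at this

theorem lt_div_slowGrowth (hρ : ∀ t, 0 ≤ ρ t) {m : ℕ} (hm : 0 < slowGrowth ρ m) :
    ρ m < m / slowGrowth ρ m := by
  have hpos : 0 < ρ m + 1 := by linarith [hρ m]
  rw [lt_div_iff₀ hm]
  have := (le_div_iff₀ hpos).1 (slowGrowth_le hρ m)
  nlinarith

theorem tendsto_slowGrowth (hρ : ∀ t, 0 ≤ ρ t) (hsub : Sublinear ρ) :
    Tendsto (slowGrowth ρ) atTop atTop := by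
  have hinv : Tendsto (fun k : ℕ => (ρ k + 1) / k) atTop (nhdsWithin 0 (Set.Ioi 0)) := by
    refine tendsto_nhdsWithin_iff.2 ⟨?_, ?_⟩
    · simpa [add_div] using hsub.add tendsto_one_div_atTop_nhds_zero_nat
    · filter_upwards [eventually_gt_atTop 0] with k hk
      exact div_pos (by linarith [hρ k] : 0 < ρ k + 1) (Nat.cast_pos.2 hk)
  have hratio : Tendsto (fun k : ℕ => (k : ℝ) / (ρ k + 1)) atTop atTop := by
    refine (tendsto_inv_nhdsGT_zero.comp hinv).congr fun k => ?_
    simp [inv_div]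
  refine tendsto_atTop.2 fun C => ?_
  obtain ⟨M, hM⟩ := eventually_atTop.1 (hratio.eventually_ge_atTop C)
  filter_upwards [eventually_ge_atTop M] with m hm
  exact le_ciInf fun k => hM (m + k) (by omega)

theorem viable_max_six_slowGrowth (hρ : ∀ t, 0 ≤ ρ t) (hsub : Sublinear ρ) :
    Viable fun m => max 6 (slowGrowth ρ m) :=
  ⟨fun _ _ h => max_le_max le_rfl (slowGrowth_mono hρ h), fun _ => le_max_left _ _,
    tendsto_atTop_mono (fun _ => le_max_right _ _) (tendsto_slowGrowth hρ hsub)⟩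

end SlowGrowth

theorem pairCPrimeOverF_of_infix_ray {R : Set (Word S)} (hSC : SmallCancellation R (1/6))
    {γ : ℕ → S × Bool} {N : ℕ}
    (hN : ∀ m, N ≤ m → 6 ≤ slowGrowth (fun t => (intersectionFn R γ t : ℝ)) m)
    {w r₀ : Word S} (hr₀ : r₀ ∈ cyclicClosure R) (hwr₀ : w <:+: r₀) (hlen : N ≤ r₀.length)
    (hwγ : ∃ m, w <:+: rayPrefix γ m) :
    PairCPrimeOverF w R fun m => max 6 (slowGrowth (fun t => (intersectionFn R γ t : ℝ)) m) := by
  intro p hpw r hr hpr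
  have hρ : ∀ t, 0 ≤ (intersectionFn R γ t : ℝ) := fun t => Nat.cast_nonneg _
  have hpρ : (p.length : ℝ) ≤ intersectionFn R γ r.length :=
    Nat.cast_le.2 (length_le_intersectionFn hr hpr (hwγ.imp fun _ => hpw.trans))
  show (p.length : ℝ) < r.length / max 6 (slowGrowth _ r.length)
  rcases le_or_gt 6 (slowGrowth (fun t => (intersectionFn R γ t : ℝ)) r.length) with hg | hg
  · rw [max_eq_right hg]
    exact hpρ.trans_lt (lt_div_slowGrowth hρ (by linarith))
  · rw [max_eq_left hg.le]
    have hr₀r : r₀.length ≠ r.length := fun h => hg.not_ge (hN _ (h ▸ hlen))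
    have hpiece := isPiece_of_infix_of_length_ne hr₀ hr (hpw.trans hwr₀) hpr hr₀r
    have := hSC p hpiece r hr hpr
    linarith

section ExhaustionCandidate

variable (n : ℕ → ℕ)

-- Indices with `n i > m` contribute `m` instead of being excluded, so that the infimum in
-- `ratioEnvelope` never runs over an empty set (where it would take the junk value `0`).
noncomputable def thresholdRatio (i m : ℕ) : ℝ :=
  if n i ≤ m then (m : ℝ) / i else m

noncomputable def ratioEnvelope (j m : ℕ) : ℝ :=
  ⨅ i, thresholdRatio n (j + i) m

noncomputable def exhaustionCandidate (j t : ℕ) : ℝ :=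
  j + (Finset.range (t + 1)).sup' Finset.nonempty_range_add_one (ratioEnvelope n j)

variable {n}

theorem thresholdRatio_nonneg (i m : ℕ) : 0 ≤ thresholdRatio n i m := by
  unfold thresholdRatio
  split <;> positivity

theorem thresholdRatio_le (i m : ℕ) : thresholdRatio n i m ≤ n i + m / i := by
  unfold thresholdRatio
  split
  · exact le_add_of_nonneg_left (Nat.cast_nonneg _)
  · have : (m : ℝ) ≤ n i := by exact_mod_cast (not_le.1 ‹_›).le
    linarith [div_nonneg m.cast_nonneg (i.cast_nonneg (α := ℝ))]

theorem ratioEnvelope_nonneg (j m : ℕ) : 0 ≤ ratioEnvelope n j m :=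
  le_ciInf fun _ => thresholdRatio_nonneg _ _

theorem ratioEnvelope_le_thresholdRatio {j i : ℕ} (hji : j ≤ i) (m : ℕ) :
    ratioEnvelope n j m ≤ thresholdRatio n i m := by
  obtain ⟨d, rfl⟩ := Nat.exists_eq_add_of_le hji
  exact ciInf_le ⟨0, by rintro _ ⟨k, rfl⟩; exact thresholdRatio_nonneg _ _⟩ d

theorem le_exhaustionCandidate {j m t : ℕ} (hmt : m ≤ t) :
    j + ratioEnvelope n j m ≤ exhaustionCandidate n j t :=
  add_le_add_right (Finset.le_sup' _ (Finset.mem_range.2 (Nat.lt_succ_of_le hmt))) _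

theorem exhaustionCandidate_nonneg (j t : ℕ) : 0 ≤ exhaustionCandidate n j t :=
  (add_nonneg j.cast_nonneg (ratioEnvelope_nonneg j 0)).trans (le_exhaustionCandidate t.zero_le)

theorem exhaustionCandidate_le_succ (j t : ℕ) :
    exhaustionCandidate n j t ≤ exhaustionCandidate n (j + 1) t := by
  refine add_le_add (by simp) (Finset.sup'_mono_fun fun m _ => le_ciInf fun i => ?_)
  exact ratioEnvelope_le_thresholdRatio (by omega) m

theorem exhaustionCandidate_le {j i : ℕ} (hji : j ≤ i) (t : ℕ) :
    exhaustionCandidate n j t ≤ (j + n i) + t / i := by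
  rw [exhaustionCandidate, add_assoc]
  refine add_le_add_right (Finset.sup'_le _ _ fun m hm => ?_) _
  calc ratioEnvelope n j m ≤ n i + m / i :=
        (ratioEnvelope_le_thresholdRatio hji m).trans (thresholdRatio_le i m)
    _ ≤ n i + t / i := by
        gcongr
        exact Nat.lt_succ_iff.1 (Finset.mem_range.1 hm)

theorem sublinear_exhaustionCandidate (j : ℕ) : Sublinear (exhaustionCandidate n j) := by
  refine sublinear_of_le_add_mul (exhaustionCandidate_nonneg j) fun ε hε => ?_
  obtain ⟨k, hk⟩ := exists_nat_one_div_lt hε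
  refine ⟨j + n (j + k + 1), fun t =>
    (exhaustionCandidate_le (i := j + k + 1) (by omega) t).trans ?_⟩
  have hi : (1 : ℝ) / (j + k + 1 : ℕ) ≤ 1 / (k + 1) :=
    one_div_le_one_div_of_le (by positivity) (by push_cast; linarith [j.cast_nonneg (α := ℝ)])
  have : (t : ℝ) / (j + k + 1 : ℕ) ≤ ε * t := by
    rw [div_eq_mul_one_div, mul_comm]
    exact mul_le_mul_of_nonneg_right (hi.trans hk.le) t.cast_nonneg
  linarith

end ExhaustionCandidate

theorem exists_of_exhaustionCandidate_lt_intersectionFn {R : Set (Word S)} {γ : ℕ → S × Bool}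
    {n : ℕ → ℕ} {j t : ℕ} (h : exhaustionCandidate n j t < intersectionFn R γ t) :
    ∃ i, j ≤ i ∧ ∃ w r, r ∈ cyclicClosure R ∧ w <:+: r ∧ (∃ m, w <:+: rayPrefix γ m) ∧
      n i ≤ r.length ∧ (r.length : ℝ) / i < w.length ∧ j < w.length := by
  have hpos : 0 < intersectionFn R γ t :=
    Nat.cast_pos.1 ((exhaustionCandidate_nonneg j t).trans_lt h)
  obtain ⟨w, r, hr, hrt, hwr, hwγ, hw⟩ := exists_length_eq_intersectionFn hpos
  have hlt : j + ratioEnvelope n j r.length < w.length :=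
    hw ▸ (le_exhaustionCandidate hrt).trans_lt h
  have hjw : j < w.length := by
    have := ratioEnvelope_nonneg (n := n) j r.length
    exact_mod_cast (show (j : ℝ) < w.length by linarith)
  obtain ⟨i, hi⟩ :=
    exists_lt_of_ciInf_lt ((le_add_of_nonneg_left j.cast_nonneg).trans_lt hlt)
  have hwr' : (w.length : ℝ) ≤ r.length := Nat.cast_le.2 hwr.length_le
  unfold thresholdRatio at hi
  split at hi
  · exact ⟨j + i, by omega, w, r, hr, hwr, hwγ, ‹_›, hi, hjw⟩
  · linarith

end SmallCancel

open SmallCancel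

theorem no_sublinear_exhaustion_implies_IPSC_general {S : Type}
    (R : Set (Word S))
    (hSC : SmallCancellation R (1/6))
    (hno : ¬ SublinearExhaustion R) :
    IPSC R := by
  intro n _
  obtain ⟨γ, -, hγ, hfar⟩ : ∃ γ, IsGeodesicRay R γ ∧
      Sublinear (fun t => (intersectionFn R γ t : ℝ)) ∧
      ∀ j, ∃ t, exhaustionCandidate n j t < intersectionFn R γ t := by
    by_contra! h
    exact hno ⟨exhaustionCandidate n, sublinear_exhaustionCandidate,
      exhaustionCandidate_le_succ, fun γ hgeo hsub => h γ hgeo hsub⟩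
  have hρ : ∀ t, 0 ≤ (intersectionFn R γ t : ℝ) := fun t => Nat.cast_nonneg _
  obtain ⟨N, hN⟩ := Filter.eventually_atTop.1 ((tendsto_slowGrowth hρ hγ).eventually_ge_atTop 6)
  refine ⟨_, viable_max_six_slowGrowth hρ hγ, fun K => ?_⟩
  obtain ⟨t, ht⟩ := hfar (K + N)
  obtain ⟨i, hi, w, r, hr, hwr, hwγ, hni, hri, hw⟩ :=
    exists_of_exhaustionCandidate_lt_intersectionFn ht
  obtain ⟨y, hy, hylen⟩ := exists_append_mem_cyclicClosure_of_infix hr hwr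
  refine ⟨i, by omega, w, y, hy, hylen ▸ hni, hylen ▸ hri.le, ?_⟩
  exact pairCPrimeOverF_of_infix_ray hSC hN hr hwr (by have := hwr.length_le; omega) hwγ

/-- Lemma 3.7 of the paper. Let `G = ⟨S|R⟩` be a `C'(1/6)`-group.
If there is no sublinear exhaustion for `(S,R)` (i.e. the Morse boundary of `G` is
not σ-compact), then `G` satisfies the IPSC. -/
theorem no_sublinear_exhaustion_implies_IPSC {S : Type} [Finite S]
    (R : Set (Word S)) (hRcyc : ∀ r ∈ R, CyclicallyReduced r)
    (hSC : SmallCancellation R (1/6))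
    (hno : ¬ SublinearExhaustion R) :
    IPSC R :=
  no_sublinear_exhaustion_implies_IPSC_general R hSC hno
end

section
/- Let G = ⟨S|R⟩ be a C'(1/6)-group satisfying the increasing partial small-cancellation condition (IPSC). Then G satisfies the strong IPSC. -/
namespace SmallCancel

/-- Drop the initial maximal run of equal letters of a word. -/
def dropHeadRun {S : Type} [DecidableEq S] : Word S → Word S
  | [] => []
  | a :: l => l.dropWhile (fun b => b = a)

/-- The interior of a reduced word `w = s₁^{k₁} ⋯ s_n^{k_n}` (maximal runs) is
`s₂^{k₂} ⋯ s_{n-1}^{k_{n-1}}`: remove the first and last maximal run of letters.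
(For a reduced word, consecutive runs use letters that are neither equal nor
mutually inverse, so maximal runs of equal letters are exactly the blocks
`s_j^{k_j}`.) -/
def interior {S : Type} [DecidableEq S] (w : Word S) : Word S :=
  (dropHeadRun ((dropHeadRun w).reverse)).reverse

/-- The strong increasing partial small-cancellation condition: the IPSC with the
requirement `|x| ≥ |r|/i` replaced by `|x′| ≥ |r|/i` where `x′` is the interior
of `x`. -/
def StrongIPSC {S : Type} [DecidableEq S] (R : Set (Word S)) : Prop :=
  ∀ n : ℕ → ℕ, (∀ i, 0 < n i) → ∃ f : ℕ → ℝ, Viable f ∧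
    ∀ K : ℕ, ∃ i, K ≤ i ∧ ∃ x y : Word S, x ++ y ∈ cyclicClosure R ∧
      n i ≤ (x ++ y).length ∧ ((x ++ y).length : ℝ) / i ≤ (interior x).length ∧
      PairCPrimeOverF x R f

end SmallCancel

/-!
Feed the IPSC a sequence that at index `i` dominates `n (2i)`, `8i²`, and, for every letter
`β` for which they are bounded, the lengths of the relators `r ∈ R̄` containing a power `β^m`
with `m > |r| / (8i)`. Let `x` be a resulting witness at index `i` for a relator of length `L`.
If `x` contains no `β^m` with `m > L / (8i)`, removing its first and last runs costs at most
`L / (4i)` letters, so `x` witnesses the strong IPSC at index `2i`. Otherwise, for some `c`,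
relators with `β`-powers of proportion `> 1 / c` are arbitrarily long; one of them, `r`, has
`f |r| ≥ c`, so the `C'(1/f)` condition keeps that power of `β`, whose length does not depend
on `i`, out of every witness, whereas `x` contains `β^m` with `m > i`.
-/

namespace SmallCancel

open Filter

variable {S : Type}

theorem _root_.Finite.exists_forall_of_monotone {ι : Type*} [Finite ι] {P : ι → ℕ → Prop}
    (hmono : ∀ i, Monotone (P i)) (h : ∀ i, ∃ n, P i n) : ∃ N, ∀ i, P i N := by
  choose n hn using h
  obtain ⟨N, hN⟩ := Finite.exists_le n
  exact ⟨N, fun i => hmono i (hN i) (hn i)⟩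

theorem _root_.List.replicate_infix_of_le {α : Type*} {a : α} {m n : ℕ} {w : List α} (h : m ≤ n)
    (hw : List.replicate n a <:+: w) : List.replicate m a <:+: w :=
  (List.prefix_replicate_iff.2 ⟨by simpa using h, by simp⟩).isInfix.trans hw

section Interior

variable [DecidableEq S] {d : ℕ} {w : Word S}

theorem dropHeadRun_suffix (w : Word S) : dropHeadRun w <:+ w := by
  cases w with
  | nil => exact List.suffix_refl _
  | cons a l => exact (List.dropWhile_suffix _).trans (List.suffix_cons a l)

theorem length_le_length_dropHeadRun_add (h : ∀ β, ¬ List.replicate (d + 1) β <:+: w) :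
    w.length ≤ (dropHeadRun w).length + d := by
  cases w with
  | nil => simp [dropHeadRun]
  | cons a l =>
    set t := l.takeWhile (fun b => b = a)
    have ht : a :: t = List.replicate (t.length + 1) a := by
      rw [List.replicate_succ, ← List.eq_replicate_iff.2
        ⟨rfl, fun b hb => by simpa using List.mem_takeWhile_imp hb⟩]
    have hrun : List.replicate (t.length + 1) a <+: a :: l :=
      ht ▸ ⟨_, by rw [List.cons_append, List.takeWhile_append_dropWhile]⟩
    have ht_le : t.length + 1 ≤ d := by
      by_contra! hd
      exact h a (List.replicate_infix_of_le hd hrun.isInfix)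
    have hl : l.length = t.length + (l.dropWhile (fun b => b = a)).length := by
      rw [← List.length_append, List.takeWhile_append_dropWhile]
    simp only [dropHeadRun, List.length_cons]
    omega

theorem length_le_length_interior_add (h : ∀ β, ¬ List.replicate (d + 1) β <:+: w) :
    w.length ≤ (interior w).length + 2 * d := by
  have hhead := length_le_length_dropHeadRun_add h
  have htail := length_le_length_dropHeadRun_add (w := (dropHeadRun w).reverse) fun β hβ =>
    h β ((by simpa using hβ.reverse : List.replicate (d + 1) β <:+: dropHeadRun w).trans
      (dropHeadRun_suffix w).isInfix)
  simp only [interior, List.length_reverse] at htail ⊢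
  omega

theorem div_le_length_interior {x : Word S} {L i : ℕ} (hi : 0 < i)
    (hx : (L : ℝ) / i ≤ x.length)
    (h : ∀ β, ¬ List.replicate (L / (8 * i) + 1) β <:+: x) :
    (L : ℝ) / ((2 * i : ℕ) : ℝ) ≤ (interior x).length := by
  have hint : (x.length : ℝ) ≤ (interior x).length + 2 * ((L / (8 * i) : ℕ) : ℝ) := by
    exact_mod_cast length_le_length_interior_add h
  have hrun : ((L / (8 * i) : ℕ) : ℝ) ≤ (L : ℝ) / i / 8 := by
    calc ((L / (8 * i) : ℕ) : ℝ) ≤ (L : ℝ) / ((8 * i : ℕ) : ℝ) := Nat.cast_div_le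
      _ = (L : ℝ) / i / 8 := by push_cast; ring
  have hq : 0 ≤ (L : ℝ) / i := by positivity
  have h2i : (L : ℝ) / ((2 * i : ℕ) : ℝ) = (L : ℝ) / i / 2 := by push_cast; ring
  linarith

end Interior

def longRunLengths (R : Set (Word S)) (β : S × Bool) (c : ℕ) : Set ℕ :=
  {L | ∃ r ∈ cyclicClosure R, r.length = L ∧ List.replicate (L / c + 1) β <:+: r}

/- A power `β^m` of a relator `r` with `m > |r| / c` and `f |r| ≥ c` is too long to be
shared with a word `x` for which `(x, R)` is `C'(1/f)`. -/
theorem exists_not_replicate_infix_of_not_bddAbove {R : Set (Word S)} {f : ℕ → ℝ}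
    (hf : Tendsto f atTop atTop) {β : S × Bool} {c : ℕ} (hc : 0 < c)
    (hA : ¬ BddAbove (longRunLengths R β c)) :
    ∃ M, ∀ x, PairCPrimeOverF x R f → ¬ List.replicate M β <:+: x := by
  obtain ⟨N, hN⟩ := (hf.eventually_ge_atTop (c : ℝ)).exists_forall_of_atTop
  obtain ⟨L, ⟨r, hr, rfl, hrun⟩, hNL⟩ := not_bddAbove_iff.1 hA N
  refine ⟨r.length / c + 1, fun x hx hrunx => ?_⟩
  have hshared := hx _ hrunx r hr hrun
  rw [List.length_replicate] at hshared
  have hc' : (0 : ℝ) < c := by exact_mod_cast hc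
  have hfr : (r.length : ℝ) / f r.length ≤ r.length / c :=
    div_le_div_of_nonneg_left (Nat.cast_nonneg _) hc' (hN _ hNL.le)
  have hfloor : (r.length : ℝ) / c < ((r.length / c + 1 : ℕ) : ℝ) := by
    rw [← Nat.floor_div_eq_div (K := ℝ), Nat.cast_add_one]
    exact Nat.lt_floor_add_one _
  linarith

theorem exists_not_replicate_infix [Finite S] {R : Set (Word S)} {f : ℕ → ℝ}
    (hf : Tendsto f atTop atTop) :
    ∃ M, ∀ β, (∃ c, 0 < c ∧ ¬ BddAbove (longRunLengths R β c)) →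
      ∀ x, PairCPrimeOverF x R f → ¬ List.replicate M β <:+: x := by
  refine Finite.exists_forall_of_monotone
    (fun β m n hmn hm hA x hx hrun => hm hA x hx (List.replicate_infix_of_le hmn hrun))
    fun β => ?_
  by_cases hA : ∃ c, 0 < c ∧ ¬ BddAbove (longRunLengths R β c)
  · obtain ⟨c, hc, hunb⟩ := hA
    obtain ⟨M, hM⟩ := exists_not_replicate_infix_of_not_bddAbove hf hc hunb
    exact ⟨M, fun _ => hM⟩
  · exact ⟨0, fun h => absurd h hA⟩

theorem exists_forall_lt_of_bddAbove {ι : Type*} [Finite ι] (A : ι → Set ℕ) :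
    ∃ N, ∀ i, BddAbove (A i) → ∀ L ∈ A i, L < N :=
  Finite.exists_forall_of_monotone
    (fun i m n hmn hm hA L hL => (hm hA L hL).trans_le hmn)
    fun i => by
      by_cases hA : BddAbove (A i)
      · obtain ⟨b, hb⟩ := hA
        exact ⟨b + 1, fun _ L hL => Nat.lt_succ_of_le (hb hL)⟩
      · exact ⟨0, fun h => absurd h hA⟩

end SmallCancel

open SmallCancel

theorem IPSC_implies_strongIPSC_general {S : Type} [Finite S] [DecidableEq S]
    (R : Set (Word S))
    (hIPSC : IPSC R) :
    StrongIPSC R := by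
  intro n hn
  choose N hN using fun j => exists_forall_lt_of_bddAbove fun β => longRunLengths R β (8 * j)
  obtain ⟨f, hf, hwit⟩ :=
    hIPSC (fun j => n (2 * j) + 8 * j * j + N j) fun j => by have := hn (2 * j); omega
  obtain ⟨M, hM⟩ := exists_not_replicate_infix (R := R) hf.2.2
  refine ⟨f, hf, fun K => ?_⟩
  obtain ⟨i, hi, x, y, hr, hlen, hx, hpair⟩ := hwit (max K (max M 1))
  set L := (x ++ y).length
  have hno_long_run : ∀ β, ¬ List.replicate (L / (8 * i) + 1) β <:+: x := by
    intro β hβ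
    have hA : ¬ BddAbove (longRunLengths R β (8 * i)) := fun hbdd =>
      absurd (hN i β hbdd L ⟨x ++ y, hr, rfl, hβ.trans (List.infix_append [] x y)⟩) (by omega)
    have hML : M ≤ L / (8 * i) := (Nat.le_div_iff_mul_le (by omega)).2 <|
      (Nat.mul_le_mul_right (8 * i) (show M ≤ i by omega)).trans (by rw [Nat.mul_comm]; omega)
    exact hM β ⟨8 * i, by omega, hA⟩ x hpair (List.replicate_infix_of_le (by omega) hβ)
  exact ⟨2 * i, by omega, x, y, hr, by omega, div_le_length_interior (by omega) hx hno_long_run, hpair⟩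

/-- Lemma 3.9 of the paper. Let `G = ⟨S|R⟩` be a `C'(1/6)`-group
satisfying the IPSC. Then `G` satisfies the strong IPSC. -/
theorem IPSC_implies_strongIPSC {S : Type} [Finite S] [DecidableEq S]
    (R : Set (Word S)) (hRcyc : ∀ r ∈ R, CyclicallyReduced r)
    (hSC : SmallCancellation R (1/6))
    (hIPSC : IPSC R) :
    StrongIPSC R :=
  IPSC_implies_strongIPSC_general R hIPSC
end

section
/- Let f be a viable function and let G = ⟨S|R⟩ be a C'(1/f)-group. Then G satisfies the increasing partial small-cancellation condition (IPSC). -/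
open SmallCancel

theorem SmallCancel.rotate_mem_cyclicClosure_s6 {S : Type} (R : Set (Word S)) (r : Word S)
    (a : ℕ) (hr : r ∈ cyclicClosure R) : r.rotate a ∈ cyclicClosure R := by
  obtain ⟨r', hr', m, h | h⟩ := hr
  · exact ⟨r', hr', m + a, Or.inl (by rw [h, List.rotate_rotate])⟩
  · exact ⟨r', hr', m + a, Or.inr (by rw [h, List.rotate_rotate])⟩

theorem SmallCancel.prefix_rotate {S : Type} (l a p b : Word S) (h : a ++ p ++ b = l) :
    p <+: l.rotate a.length := by
  subst h
  rw [List.append_assoc, List.rotate_append_length_eq]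
  exact ⟨b ++ a, by simp⟩

theorem SmallCancel.aux_arith (K M₀ : ℕ) (h : (20 + 2 * K) ^ 2 < M₀) :
    (M₀ / (20 + 2 * K) + 1) * (7 + K) < M₀ := by
  have hipos : 0 < 20 + 2 * K := by omega
  have hq : 20 + 2 * K ≤ M₀ / (20 + 2 * K) := by
    rw [Nat.le_div_iff_mul_le hipos]
    nlinarith
  have h1 : M₀ / (20 + 2 * K) * (20 + 2 * K) ≤ M₀ := Nat.div_mul_le_self _ _
  have h3 : K * (20 + 2 * K) ≤ K * (M₀ / (20 + 2 * K)) := Nat.mul_le_mul_left K hq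
  nlinarith [hq, h1, h3]

theorem SmallCancel.aux_lt_mul (M₀ i : ℕ) (hipos : 0 < i) : M₀ < (M₀ / i + 1) * i := by
  calc M₀ = i * (M₀ / i) + M₀ % i := (Nat.div_add_mod M₀ i).symm
    _ < i * (M₀ / i) + i := Nat.add_lt_add_left (Nat.mod_lt _ hipos) _
    _ = (M₀ / i + 1) * i := by ring

/-- part of Corollary 3.11 of the paper. Let `f` be a viable
function and let `G = ⟨S|R⟩` be a `C'(1/f)`-group. Then `G` satisfies the
increasing partial small-cancellation condition (IPSC). -/
theorem cPrimeOverF_implies_IPSC {S : Type} [Finite S]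
    (R : Set (Word S)) (hRcyc : ∀ r ∈ R, CyclicallyReduced r)
    (f : ℕ → ℝ) (hf : Viable f) (hinf : R.Infinite) (hCf : CPrimeOverF R f) :
    IPSC R := by
  classical
  have hlong : ∀ B : ℕ, ∃ r, r ∈ R ∧ B < r.length := by
    intro B
    by_contra h
    push_neg at h
    exact hinf (Set.Finite.subset (List.finite_length_le (S × Bool) B)
      (fun r hr => h r hr))
  intro n hn
  set pick : ℕ → Word S := fun B => (hlong B).choose with hpickdef
  have hpick : ∀ B, pick B ∈ R ∧ B < (pick B).length := fun B => (hlong B).choose_spec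
  set rel : ℕ → Word S := fun j =>
    Nat.rec (pick (max (n 20) (20 ^ 2)))
      (fun j prev => pick (max (max (n (20 + 2 * (j + 1))) ((20 + 2 * (j + 1)) ^ 2))
        prev.length)) j with hreldef
  set M : ℕ → ℕ := fun j => (rel j).length with hMdef
  have hrelR : ∀ j, rel j ∈ R := by
    intro j
    cases j with
    | zero => exact (hpick _).1
    | succ j => exact (hpick _).1
  have hMn : ∀ j, n (20 + 2 * j) < M j ∧ (20 + 2 * j) ^ 2 < M j := by
    intro j
    cases j with
    | zero =>
      exact ⟨lt_of_le_of_lt (le_max_left _ _) (hpick _).2,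
        lt_of_le_of_lt (le_max_right _ _) (hpick _).2⟩
    | succ j =>
      exact ⟨lt_of_le_of_lt (le_max_of_le_left (le_max_left _ _)) (hpick _).2,
        lt_of_le_of_lt (le_max_of_le_left (le_max_right _ _)) (hpick _).2⟩
  have hMmono : StrictMono M := by
    apply strictMono_nat_of_lt_succ
    intro j
    exact lt_of_le_of_lt (le_max_right _ _) (hpick _).2
  set g : ℕ → ℕ := fun t => 6 + ((Finset.range (t + 1)).filter (fun j => M j ≤ t)).card
    with hgdef
  have hgmono : Monotone g := by
    intro t t' htt'
    apply Nat.add_le_add_left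
    apply Finset.card_le_card
    intro j hj
    simp only [Finset.mem_filter, Finset.mem_range] at hj ⊢
    omega
  have hg6 : ∀ t, 6 ≤ g t := fun t => Nat.le_add_right 6 _
  have hgub : ∀ K, g (M K) ≤ 7 + K := by
    intro K
    have : ((Finset.range (M K + 1)).filter (fun j => M j ≤ M K)).card ≤ K + 1 := by
      calc _ ≤ (Finset.range (K + 1)).card := by
              apply Finset.card_le_card
              intro j hj
              simp only [Finset.mem_filter, Finset.mem_range] at hj ⊢
              have := hMmono.le_iff_le.mp hj.2
              omega
        _ = K + 1 := Finset.card_range _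
    simp only [hgdef]
    omega
  have hglb : ∀ b t, M b ≤ t → b ≤ g t := by
    intro b t hbt
    have hsub : Finset.range (b + 1) ⊆ (Finset.range (t + 1)).filter (fun j => M j ≤ t) := by
      intro j hj
      simp only [Finset.mem_range] at hj
      have hjb : j ≤ b := by omega
      have h1 : M j ≤ M b := hMmono.monotone hjb
      have h2 : j ≤ M j := hMmono.le_apply
      simp only [Finset.mem_filter, Finset.mem_range]
      omega
    have := Finset.card_le_card hsub
    simp only [Finset.card_range] at this
    simp only [hgdef]
    omega
  set f' : ℕ → ℝ := fun t => min (f t) (g t : ℝ) with hf'def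
  have hf'6 : ∀ t, (6 : ℝ) ≤ f' t := by
    intro t
    exact le_min (hf.2.1 t) (by exact_mod_cast hg6 t)
  have hf'pos : ∀ t, (0 : ℝ) < f' t := fun t => lt_of_lt_of_le (by norm_num) (hf'6 t)
  have hf'le : ∀ t, f' t ≤ f t := fun t => min_le_left _ _
  refine ⟨f', ⟨?_, hf'6, ?_⟩, ?_⟩
  · intro t t' h
    exact min_le_min (hf.1 h) (by exact_mod_cast hgmono h)
  · rw [Filter.tendsto_atTop]
    intro b
    have h1 := hf.2.2
    rw [Filter.tendsto_atTop] at h1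
    have h2 : ∀ᶠ t in Filter.atTop, b ≤ (g t : ℝ) := by
      obtain ⟨b', hb'⟩ := exists_nat_ge b
      filter_upwards [Filter.eventually_ge_atTop (M b')] with t ht
      calc b ≤ (b' : ℝ) := hb'
        _ ≤ (g t : ℝ) := by exact_mod_cast hglb b' t ht
    filter_upwards [h1 b, h2] with t ht1 ht2
    exact le_min ht1 ht2
  · intro K
    refine ⟨20 + 2 * K, by omega, ?_⟩
    set r₀ : Word S := rel K with hr₀def
    set M₀ : ℕ := M K with hM₀def
    have hM₀i : (20 + 2 * K) ^ 2 < M₀ := (hMn K).2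
    have hM₀n : n (20 + 2 * K) < M₀ := (hMn K).1
    have hipos : 0 < 20 + 2 * K := by omega
    have hM₀pos : 0 < M₀ := by nlinarith
    set L : ℕ := M₀ / (20 + 2 * K) + 1 with hLdef
    have hLle : L ≤ M₀ := by
      have h1 : M₀ / (20 + 2 * K) < M₀ := Nat.div_lt_self hM₀pos (by omega)
      omega
    set x : Word S := r₀.take L with hxdef
    set y : Word S := r₀.drop L with hydef
    have hxy : x ++ y = r₀ := List.take_append_drop L r₀
    have hr₀len : r₀.length = M₀ := rfl
    have hxlen : x.length = L := by
      rw [hxdef, List.length_take, hr₀len]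
      omega
    have hr₀mem : r₀ ∈ cyclicClosure R :=
      ⟨r₀, hrelR K, 0, Or.inl (List.rotate_zero r₀).symm⟩
    have hkey : L * (7 + K) < M₀ := SmallCancel.aux_arith K M₀ hM₀i
    refine ⟨x, y, by rw [hxy]; exact hr₀mem, ?_, ?_, ?_⟩
    · rw [hxy, hr₀len]; omega
    · rw [hxy, hr₀len, hxlen]
      rw [div_le_iff₀ (by exact_mod_cast hipos)]
      exact_mod_cast (SmallCancel.aux_lt_mul M₀ (20 + 2 * K) hipos).le
    · intro p hpx r hr hpr
      obtain ⟨a, b, hab⟩ := hpr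
      obtain ⟨c, d, hcd⟩ := hpx
      have hr₀eq : c ++ p ++ (d ++ y) = r₀ := by
        rw [← hxy, ← hcd]; simp [List.append_assoc]
      set u : Word S := r.rotate a.length with hudef
      set v : Word S := r₀.rotate c.length with hvdef
      have hu_mem : u ∈ cyclicClosure R := SmallCancel.rotate_mem_cyclicClosure_s6 R r _ hr
      have hv_mem : v ∈ cyclicClosure R := SmallCancel.rotate_mem_cyclicClosure_s6 R r₀ _ hr₀mem
      have hp_u : p <+: u := SmallCancel.prefix_rotate r a p b hab
      have hp_v : p <+: v := SmallCancel.prefix_rotate r₀ c p (d ++ y) hr₀eq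
      by_cases huv : u = v
      · have hrlen : r.length = M₀ := by
          have h1 : u.length = r.length := List.length_rotate r a.length
          have h2 : v.length = r₀.length := List.length_rotate r₀ c.length
          rw [← h1, huv, h2, hr₀len]
        rw [hrlen]
        have hplen : p.length ≤ L := by
          have : p.length ≤ x.length := List.IsInfix.length_le ⟨c, d, hcd⟩
          omega
        have hf'ub : f' M₀ ≤ (7 + K : ℝ) := by
          calc f' M₀ ≤ (g M₀ : ℝ) := min_le_right _ _
            _ ≤ ((7 + K : ℕ) : ℝ) := by exact_mod_cast hgub K
            _ = (7 + K : ℝ) := by push_cast; ring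
        calc (p.length : ℝ) ≤ (L : ℝ) := by exact_mod_cast hplen
          _ < (M₀ : ℝ) / (7 + K : ℝ) := by
              rw [lt_div_iff₀ (by positivity)]
              exact_mod_cast hkey
          _ ≤ (M₀ : ℝ) / f' M₀ := by
              apply div_le_div_of_nonneg_left _ (hf'pos M₀) hf'ub
              exact_mod_cast Nat.zero_le M₀
      · have hpiece : IsPiece R p := ⟨u, hu_mem, v, hv_mem, huv, hp_u, hp_v⟩
        have hbound := hCf p hpiece r hr ⟨a, b, hab⟩
        calc (p.length : ℝ) < (r.length : ℝ) / f r.length := hbound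
          _ ≤ (r.length : ℝ) / f' r.length := by
              apply div_le_div_of_nonneg_left _ (hf'pos r.length) (hf'le r.length)
              exact_mod_cast Nat.zero_le r.length
end

section
/- In the Section-4 construction, for all integers 1 ≤ k′ < k, all i ∈ {1,2,3} and all 1 ≤ l ≤ N, the word y_{(i,l)}^k can be written as a concatenation y_{(i,l)}^k = ∏_{j=1}^m y_{(i_j,l_j)}^{k′} for some integer m ≥ 2 and indices (i_j, l_j) such that: (1) i_1 ≠ i_2 and i_{m−1} ≠ i_m; and (2) whenever i_j = i_{j+1}, one has i_{j−1} ≠ i_j and i_{j+2} ≠ i_{j+1}. -/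
namespace SmallCancel

/-- A word `w` of length `n` (with letters in `S`) is non-periodic if the `2n` words
obtained as cyclic shifts of `w` and of `w⁻¹` are pairwise distinct. -/
def NonPeriodic {S : Type} (w : Word S) : Prop :=
  Function.Injective fun p : Fin w.length × Bool =>
    if p.2 then w.rotate p.1 else (wInv w).rotate p.1

/-- The data of the Section-4 construction: an integer `N ≥ 28`, a positive multiple
`L` of `N`, and three distinct non-periodic positive words `r_1¹, r_2¹, r_3¹` of
length `L` over `S` (indexed by `ZMod 3`, with the paper's index `i ∈ {1,2,3}` taken
modulo 3) satisfying the `C'(1/(4N))` small-cancellation condition, each given as the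
concatenation of `N` blocks `y_(i,l)¹` of length `L/N`. -/
structure Section4Data (S : Type) where
  /-- the parameter `N ≥ 28` -/
  N : ℕ
  hN : 28 ≤ N
  /-- the length `L`, a positive multiple of `N` -/
  L : ℕ
  hdvd : N ∣ L
  hLpos : 0 < L
  /-- the blocks `y_(i,l)¹`, so that `r_i¹ = y_(i,1)¹ ⋯ y_(i,N)¹` -/
  y1 : ZMod 3 → Fin N → Word S
  hlen : ∀ i l, (y1 i l).length = L / N
  /-- the level-1 relators use only letters of `S` (no inverse letters) -/
  hletters : ∀ i l, ∀ a ∈ y1 i l, a.2 = true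
  /-- the three level-1 relators are pairwise distinct -/
  hdistinct : Function.Injective fun i : ZMod 3 => (List.ofFn fun l => y1 i l).flatten
  /-- the three level-1 relators are non-periodic -/
  hnonper : ∀ i : ZMod 3, NonPeriodic ((List.ofFn fun l => y1 i l).flatten)
  /-- the level-1 relators satisfy the `C'(1/(4N))` condition -/
  hsc : SmallCancellation
    {w | ∃ i : ZMod 3, w = (List.ofFn fun l => y1 i l).flatten} (1 / (4 * N))

namespace Section4Data

variable {S : Type}

/-- The words `y_(i,l)^k` of the Section-4 construction, defined for levels `k ≥ 1`
by `y_(i,l)^{k+1} = ∏_{j=1}^{N} (y_(i,j)^k · y_(i+1,l)^k)` (the value at `k = 0` is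
irrelevant and set to `y1`). -/
def y (D : Section4Data S) : ℕ → ZMod 3 → Fin D.N → Word S
  | 0 => D.y1
  | 1 => D.y1
  | (k + 2) => fun i l =>
      (List.ofFn fun j : Fin D.N => D.y (k + 1) i j ++ D.y (k + 1) (i + 1) l).flatten

/-- The relators `r_i^k = ∏_{j=1}^{N} y_(i,j)^k` (for `k = 1` this agrees with the
given level-1 relators). -/
def r (D : Section4Data S) (k : ℕ) (i : ZMod 3) : Word S :=
  (List.ofFn fun j : Fin D.N => D.y k i j).flatten

/-- The set of relators `R = {r_i^k : 1 ≤ i ≤ 3, k ≥ 1}` of the Section-4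
construction. -/
def R (D : Section4Data S) : Set (Word S) :=
  {w | ∃ k, 1 ≤ k ∧ ∃ i : ZMod 3, w = D.r k i}

end Section4Data

end SmallCancel

/-!
Unfolding the recursion `d` times writes `y_(i,l)^{k+d+1}` as a concatenation of pairs
`y_(a,j)^k · y_(a+1,l')^k`. Inside each pair the first indices differ, so two equal consecutive
first indices can only straddle the boundary between two pairs; their outer neighbours then
belong to the same pairs as they do, and hence differ from them.
-/

theorem List.getElem?_flatMap_pair {α β : Type*} (f g : β → α) (B : List β) (t : ℕ) :
    (B.flatMap fun b => [f b, g b])[2 * t]? = B[t]?.map f ∧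
      (B.flatMap fun b => [f b, g b])[2 * t + 1]? = B[t]?.map g := by
  induction B generalizing t with
  | nil => simp
  | cons b B ih =>
    cases t with
    | zero => simp
    | succ t => simpa [Nat.mul_succ] using ih t

theorem List.map_getD_range_length {α : Type*} (L : List α) (d : α) :
    (List.range L.length).map (L.getD · d) = L := by
  refine List.ext_getElem (by simp) fun j _ hj => ?_
  simp [List.getElem?_eq_getElem hj]

theorem ne_outer_of_eq_of_two_mul_ne {α : Type*} {c : ℕ → α} {m : ℕ}
    (hc : ∀ t, 2 * t + 1 < m → c (2 * t) ≠ c (2 * t + 1))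
    {j : ℕ} (hj : j + 1 < m) (heq : c j = c (j + 1)) :
    (1 ≤ j → c (j - 1) ≠ c j) ∧ (j + 2 < m → c (j + 2) ≠ c (j + 1)) := by
  obtain ⟨t, rfl | rfl⟩ := Nat.even_or_odd' j
  · exact absurd heq (hc t hj)
  · exact ⟨fun _ => by simpa using hc t (by omega), fun _ => (hc (t + 1) (by omega)).symm⟩

namespace SmallCancel.Section4Data

/-- The triple `(a, j, l')` stands for the pair `y_(a,j)^k · y_(a+1,l')^k`. -/
def blocks (N : ℕ) : ℕ → ZMod 3 → Fin N → List (ZMod 3 × Fin N × Fin N)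
  | 0, i, l => List.ofFn fun j => (i, j, l)
  | d + 1, i, l => (List.ofFn fun j => blocks N d i j ++ blocks N d (i + 1) l).flatten

theorem mem_blocks_self {N : ℕ} (d : ℕ) (i : ZMod 3) (l : Fin N) :
    (i, l, l) ∈ blocks N d i l := by
  induction d with
  | zero => simp [blocks]
  | succ d ih =>
    simp only [blocks, List.mem_flatten, List.mem_ofFn]
    exact ⟨_, ⟨l, rfl⟩, List.mem_append_left _ ih⟩

def decomposition (N d : ℕ) (i : ZMod 3) (l : Fin N) : List (ZMod 3 × Fin N) :=
  (blocks N d i l).flatMap fun b => [(b.1, b.2.1), (b.1 + 1, b.2.2)]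

theorem length_decomposition {N : ℕ} (d : ℕ) (i : ZMod 3) (l : Fin N) :
    (decomposition N d i l).length = 2 * (blocks N d i l).length := by
  simp [decomposition, List.length_flatMap, mul_comm]

theorem fst_getD_decomposition_ne {N d : ℕ} {i : ZMod 3} {l : Fin N} (x : ZMod 3 × Fin N)
    {t : ℕ} (ht : 2 * t + 1 < (decomposition N d i l).length) :
    ((decomposition N d i l).getD (2 * t) x).1 ≠
      ((decomposition N d i l).getD (2 * t + 1) x).1 := by
  have htB : t < (blocks N d i l).length := by rw [length_decomposition] at ht; omega
  obtain ⟨h0, h1⟩ := List.getElem?_flatMap_pair (fun b => (b.1, b.2.1))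
    (fun b => (b.1 + 1, b.2.2)) (blocks N d i l) t
  simp only [decomposition, List.getD_eq_getElem?_getD, h0, h1, List.getElem?_eq_getElem htB]
  simp

variable {S : Type} (D : Section4Data S)

theorem y_succ {k : ℕ} (hk : 1 ≤ k) (i : ZMod 3) (l : Fin D.N) :
    D.y (k + 1) i l = (List.ofFn fun j => D.y k i j ++ D.y k (i + 1) l).flatten := by
  obtain ⟨k, rfl⟩ := Nat.exists_eq_add_of_le' hk
  rfl

theorem y_eq_flatMap_blocks {k : ℕ} (hk : 1 ≤ k) (d : ℕ) (i : ZMod 3) (l : Fin D.N) :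
    D.y (k + d + 1) i l =
      (blocks D.N d i l).flatMap fun b => D.y k b.1 b.2.1 ++ D.y k (b.1 + 1) b.2.2 := by
  induction d generalizing i l with
  | zero => simp [y_succ D hk, blocks, List.flatMap, List.map_ofFn, Function.comp_def]
  | succ d ih =>
    rw [← add_assoc, y_succ D (by omega)]
    simp [blocks, ih, List.flatMap_def, List.map_flatten, List.flatten_flatten, List.map_ofFn,
      Function.comp_def]

theorem y_eq_flatten_decomposition {k : ℕ} (hk : 1 ≤ k) (d : ℕ) (i : ZMod 3) (l : Fin D.N) :
    D.y (k + d + 1) i l = ((decomposition D.N d i l).map fun p => D.y k p.1 p.2).flatten := by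
  simp [y_eq_flatMap_blocks D hk, decomposition, List.flatMap_def, List.map_flatten,
    List.flatten_flatten, Function.comp_def]

end SmallCancel.Section4Data

open SmallCancel Section4Data

/-- Lemma 4.3 of the paper. In the Section-4 construction, for all
`1 ≤ k′ < k`, every word `y_(i,l)^k` can be written as a concatenation
`∏_{j=1}^m y_(i_j,l_j)^{k′}` with `m ≥ 2` such that (1) `i_1 ≠ i_2` and
`i_{m-1} ≠ i_m`, and (2) whenever `i_j = i_{j+1}`, the neighbouring indices satisfy
`i_{j-1} ≠ i_j` and `i_{j+2} ≠ i_{j+1}`. (Indices are 0-based here.) -/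
theorem section4_y_decomposition {S : Type} (D : Section4Data S) :
    ∀ k' k : ℕ, 1 ≤ k' → k' < k → ∀ (i : ZMod 3) (l : Fin D.N),
      ∃ m, 2 ≤ m ∧ ∃ idx : ℕ → ZMod 3 × Fin D.N,
        D.y k i l =
          ((List.range m).map fun j => D.y k' (idx j).1 (idx j).2).flatten ∧
        ((idx 0).1 ≠ (idx 1).1 ∧ (idx (m - 2)).1 ≠ (idx (m - 1)).1) ∧
        (∀ j, j + 1 < m → (idx j).1 = (idx (j + 1)).1 →
          (1 ≤ j → (idx (j - 1)).1 ≠ (idx j).1) ∧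
          (j + 2 < m → (idx (j + 2)).1 ≠ (idx (j + 1)).1)) := by
  intro k' k hk' hlt i l
  obtain ⟨d, rfl⟩ : ∃ d, k = k' + d + 1 := ⟨k - k' - 1, by omega⟩
  have hlen := length_decomposition d i l
  set L := decomposition D.N d i l
  set idx := (L.getD · (i, l))
  have hpos : 0 < (blocks D.N d i l).length := List.length_pos_of_mem (mem_blocks_self d i l)
  have halt : ∀ t, 2 * t + 1 < L.length → (idx (2 * t)).1 ≠ (idx (2 * t + 1)).1 :=
    fun t ht => fst_getD_decomposition_ne (i, l) ht
  refine ⟨L.length, by omega, idx, ?_, ⟨halt 0 (by omega), ?_⟩,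
    fun j hj heq => ne_outer_of_eq_of_two_mul_ne (c := fun j => (idx j).1) halt hj heq⟩
  · rw [show (fun j => D.y k' (idx j).1 (idx j).2) = (fun p => D.y k' p.1 p.2) ∘ idx from rfl,
      ← List.map_map, List.map_getD_range_length, y_eq_flatten_decomposition D hk']
  · have hlast := halt ((blocks D.N d i l).length - 1) (by omega)
    rwa [show 2 * ((blocks D.N d i l).length - 1) = L.length - 2 by omega,
      show L.length - 2 + 1 = L.length - 1 by omega] at hlast
end
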